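/- arXiv:1503.00508 — 4 statements merged into one kernel-verified Lean document; each statement's English description precedes it below -/
import Mathlib

section
/- Let n ≥ 1. Let T be a divergence-free symmetric 2-tensor field of class C¹ on EuclideanSpace ℝ n and let X be a C¹ conformal Killing field on EuclideanSpace ℝ n. Then for every point x, div(T♯X) x = (1/n)·(trace of T x)·(div X x), where trace of T x = Σᵢ (T x)(eᵢ, eᵢ) for an orthonormal basis (eᵢ). (This is the pointwise, flat-space form of Lemma 2.1 of the paper: for a divergence-free symmetric tensor paired with a conformal Killing field, the boundary flux density equals (n−2)/(2n)·Scal·δX in the curved case, and here reduces to the trace term.) -/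
open scoped RealInnerProductSpace

/-- The `i`-th standard basis vector of `EuclideanSpace ℝ (Fin n)`. -/
noncomputable def stdBasis (n : ℕ) (i : Fin n) : EuclideanSpace ℝ (Fin n) :=
  EuclideanSpace.single i (1 : ℝ)

/-- The Euclidean divergence of a vector field: the trace of its derivative. -/
noncomputable def divE (n : ℕ) (X : EuclideanSpace ℝ (Fin n) → EuclideanSpace ℝ (Fin n))
    (x : EuclideanSpace ℝ (Fin n)) : ℝ :=
  ∑ i : Fin n, ⟪fderiv ℝ X x (stdBasis n i), stdBasis n i⟫

/-! Differentiating `⟪T♯X, w⟫ = T (X, w)` and using that `D_{eᵢ} T` is again symmetric gives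
`div (T♯X) = ∑ᵢ T (DX eᵢ, eᵢ) + ∑ᵢ (D_{eᵢ} T) (eᵢ, X)`. The second sum is the divergence of `T`
applied to `X`, so it vanishes. In the first, `T` is symmetric, so only the symmetric part of `DX`
contributes, and by the conformal Killing equation that part is `(div X / n) • id`. -/

section InnerProductSpace

variable {E : Type*} [NormedAddCommGroup E] [InnerProductSpace ℝ E]

theorem inner_fderiv_apply_of_inner_eq [CompleteSpace E] {T : E → E →L[ℝ] E →L[ℝ] ℝ}
    {X Y : E → E} {x : E} (hY : ∀ y w, ⟪Y y, w⟫ = T y (X y) w)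
    (hT : DifferentiableAt ℝ T x) (hX : DifferentiableAt ℝ X x) (v w : E) :
    ⟪fderiv ℝ Y x v, w⟫ = T x (fderiv ℝ X x v) w + fderiv ℝ T x v (X x) w := by
  have hY' : Y = (InnerProductSpace.toDual ℝ E).symm ∘ fun y => T y (X y) :=
    funext fun y => ext_inner_right ℝ fun w => by
      rw [hY, Function.comp_apply, InnerProductSpace.toDual_symm_apply]
  rw [hY', LinearIsometryEquiv.comp_fderiv, fderiv_clm_apply hT hX]
  simp only [ContinuousLinearMap.comp_apply, add_apply, map_add, inner_add_left]
  exact congrArg₂ (· + ·) InnerProductSpace.toDual_symm_apply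
    InnerProductSpace.toDual_symm_apply

theorem fderiv_apply_comm_of_forall_apply_comm {T : E → E →L[ℝ] E →L[ℝ] ℝ} {x : E}
    (hsymm : ∀ y v w, T y v w = T y w v) (u v w : E) :
    fderiv ℝ T x u v w = fderiv ℝ T x u w v := by
  let F : (E →L[ℝ] E →L[ℝ] ℝ) ≃L[ℝ] (E →L[ℝ] E →L[ℝ] ℝ) :=
    (ContinuousLinearMap.flipₗᵢ ℝ E E ℝ).toContinuousLinearEquiv
  have hT : T = F ∘ T := funext fun y => by ext v w; exact hsymm y v w
  have h := ContinuousLinearEquiv.comp_fderiv (𝕜 := ℝ) (F := E →L[ℝ] E →L[ℝ] ℝ) F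
    (f := T) (x := x)
  rw [← hT] at h
  exact (congrArg (fun f => f u w v) h).symm

theorem OrthonormalBasis.sum_apply_apply_eq_mul_of_conformal {ι : Type*} [Fintype ι]
    (b : OrthonormalBasis ι ℝ E) {B : E →L[ℝ] E →L[ℝ] ℝ} (hB : ∀ v w, B v w = B w v)
    {A : E →L[ℝ] E} {c : ℝ} (hA : ∀ v w, ⟪A v, w⟫ + ⟪A w, v⟫ = 2 * c * ⟪v, w⟫) :
    ∑ i, B (A (b i)) (b i) = c * ∑ i, B (b i) (b i) := by
  classical
  set S := ∑ i, ∑ j, ⟪A (b i), b j⟫ * B (b i) (b j)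
  have hexpand : ∑ i, B (A (b i)) (b i) = S := by
    refine Finset.sum_congr rfl fun i _ => ?_
    conv_lhs => rw [← b.sum_repr' (A (b i))]
    simp only [map_sum, map_smul, FunLike.coe_sum, Finset.sum_apply,
      FunLike.coe_smul, Pi.smul_apply, smul_eq_mul]
    exact Finset.sum_congr rfl fun j _ => by rw [real_inner_comm, hB]
  have hswap : S = ∑ i, ∑ j, ⟪A (b j), b i⟫ * B (b i) (b j) := by
    rw [Finset.sum_comm]
    exact Finset.sum_congr rfl fun i _ => Finset.sum_congr rfl fun j _ => by rw [hB]
  have h2S : 2 * S = 2 * (c * ∑ i, B (b i) (b i)) := by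
    calc 2 * S = ∑ i, ∑ j, (⟪A (b i), b j⟫ + ⟪A (b j), b i⟫) * B (b i) (b j) := by
          rw [two_mul]; nth_rewrite 2 [hswap]
          simp only [S, ← Finset.sum_add_distrib, add_mul]
      _ = ∑ i, ∑ j, 2 * c * (if i = j then 1 else 0) * B (b i) (b j) := by
          simp_rw [hA, b.inner_eq_ite]
      _ = 2 * (c * ∑ i, B (b i) (b i)) := by
          simp [Finset.mul_sum, mul_assoc]
  rw [hexpand]
  linarith

end InnerProductSpace

theorem stdBasis_eq_basisFun (n : ℕ) : stdBasis n = ⇑(EuclideanSpace.basisFun (Fin n) ℝ) :=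
  funext fun i => (EuclideanSpace.basisFun_apply (Fin n) ℝ i).symm

theorem divergence_sharp_conformal_killing_general
    (n : ℕ)
    (T : EuclideanSpace ℝ (Fin n) →
      (EuclideanSpace ℝ (Fin n) →L[ℝ] EuclideanSpace ℝ (Fin n) →L[ℝ] ℝ))
    (hT : ContDiff ℝ 1 T)
    (hTsymm : ∀ x v w, T x v w = T x w v)
    (hTdivfree : ∀ (x v : EuclideanSpace ℝ (Fin n)),
      ∑ i : Fin n, fderiv ℝ T x (stdBasis n i) (stdBasis n i) v = 0)
    (X : EuclideanSpace ℝ (Fin n) → EuclideanSpace ℝ (Fin n))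
    (hX : ContDiff ℝ 1 X)
    (hCK : ∀ (x v w : EuclideanSpace ℝ (Fin n)),
      ⟪fderiv ℝ X x v, w⟫ + ⟪fderiv ℝ X x w, v⟫ = (2 / (n : ℝ)) * divE n X x * ⟪v, w⟫)
    (Y : EuclideanSpace ℝ (Fin n) → EuclideanSpace ℝ (Fin n))
    (hY : ∀ x w, ⟪Y x, w⟫ = T x (X x) w) :
    ∀ x : EuclideanSpace ℝ (Fin n),
      divE n Y x = (1 / (n : ℝ)) * (∑ i : Fin n, T x (stdBasis n i) (stdBasis n i)) *
        divE n X x := by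
  intro x
  have hXconf : ∀ v w, ⟪fderiv ℝ X x v, w⟫ + ⟪fderiv ℝ X x w, v⟫ =
      2 * (divE n X x / n) * ⟪v, w⟫ := fun v w => by rw [hCK]; ring
  have htrace := (EuclideanSpace.basisFun (Fin n) ℝ).sum_apply_apply_eq_mul_of_conformal
    (hTsymm x) hXconf
  rw [← stdBasis_eq_basisFun] at htrace
  calc divE n Y x = ∑ i, (T x (fderiv ℝ X x (stdBasis n i)) (stdBasis n i)
        + fderiv ℝ T x (stdBasis n i) (stdBasis n i) (X x)) :=
        Finset.sum_congr rfl fun i _ => by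
          rw [inner_fderiv_apply_of_inner_eq hY (hT.differentiable one_ne_zero x)
            (hX.differentiable one_ne_zero x), fderiv_apply_comm_of_forall_apply_comm hTsymm]
    _ = divE n X x / n * ∑ i, T x (stdBasis n i) (stdBasis n i) := by
        rw [Finset.sum_add_distrib, htrace, hTdivfree, add_zero]
    _ = _ := by ring

/-- **Pointwise flat-space form of Lemma 2.1.** If `T` is a divergence-free symmetric
2-tensor field of class `C¹` on Euclidean space and `X` is a `C¹` conformal Killing field,
then `div (T♯X) = (1/n) · (tr T) · (div X)` at every point. -/
theorem divergence_sharp_conformal_killing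
    (n : ℕ) (hn : 1 ≤ n)
    (T : EuclideanSpace ℝ (Fin n) →
      (EuclideanSpace ℝ (Fin n) →L[ℝ] EuclideanSpace ℝ (Fin n) →L[ℝ] ℝ))
    (hT : ContDiff ℝ 1 T)
    (hTsymm : ∀ x v w, T x v w = T x w v)
    (hTdivfree : ∀ (x v : EuclideanSpace ℝ (Fin n)),
      ∑ i : Fin n, fderiv ℝ T x (stdBasis n i) (stdBasis n i) v = 0)
    (X : EuclideanSpace ℝ (Fin n) → EuclideanSpace ℝ (Fin n))
    (hX : ContDiff ℝ 1 X)
    (hCK : ∀ (x v w : EuclideanSpace ℝ (Fin n)),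
      ⟪fderiv ℝ X x v, w⟫ + ⟪fderiv ℝ X x w, v⟫ = (2 / (n : ℝ)) * divE n X x * ⟪v, w⟫)
    (Y : EuclideanSpace ℝ (Fin n) → EuclideanSpace ℝ (Fin n))
    (hY : ∀ x w, ⟪Y x, w⟫ = T x (X x) w) :
    ∀ x : EuclideanSpace ℝ (Fin n),
      divE n Y x = (1 / (n : ℝ)) * (∑ i : Fin n, T x (stdBasis n i) (stdBasis n i)) *
        divE n X x :=
  divergence_sharp_conformal_killing_general n T hT hTsymm hTdivfree X hX hCK Y hY
end

section
/- Let n ≥ 3 and let X be a C³ conformal Killing field on EuclideanSpace ℝ n. Then the Hessian of the divergence of X vanishes identically: for every x, v, w one has Hess(div X) x (v, w) = 0; equivalently, div X is an affine function. (This is the Euclidean case, Einstein constant λ = 0, of Lemma 2.2 of the paper: the divergence of a conformal Killing field of an Einstein metric with Ric = λ(n−1)g satisfies Hess(δX) = −λ(δX)g, so in the flat case δX lies in the kernel of the adjoint (DScal)_e* of the linearized scalar curvature operator.) -/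
open scoped RealInnerProductSpace

/-!
Differentiating the conformal Killing equation `⟪DX v, w⟫ + ⟪DX w, v⟫ = c f ⟪v, w⟫` once and
using the symmetry of `D²X` in its first two slots (the Koszul trick that solves for the
Christoffel symbols) expresses `D²X` through `Df`. Differentiating that formula once more and
using the symmetry of `D³X` in its first two slots shows that the Kulkarni–Nomizu product of
`Hess f` with the metric vanishes, which forces `Hess f = 0` once the dimension is at least `3`.
-/

open Module

section LinearAlgebra

variable {E : Type*} [NormedAddCommGroup E] [InnerProductSpace ℝ E] [FiniteDimensional ℝ E]

-- The hypothesis says that the Kulkarni–Nomizu product of `H` with the inner product vanishes.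
theorem eq_zero_of_kulkarniNomizu_inner_eq_zero (hE : 3 ≤ finrank ℝ E) (H : E →L[ℝ] E →L[ℝ] ℝ)
    (hH : ∀ t u v w, H t w * ⟪u, v⟫ + H u v * ⟪t, w⟫ - H t v * ⟪u, w⟫ - H u w * ⟪t, v⟫ = 0) :
    H = 0 := by
  classical
  set b := stdOrthonormalBasis ℝ E
  have third (i j : Fin (finrank ℝ E)) : ∃ k, k ≠ i ∧ k ≠ j :=
    ENat.exists_ne_ne_of_three_le (by simpa using hE) i j
  have off_diag {i j} (hij : i ≠ j) : H (b i) (b j) = 0 := by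
    obtain ⟨k, hki, hkj⟩ := third i j
    simpa [b.inner_eq_ite, hki, hkj, hij, hki.symm, hkj.symm] using hH (b i) (b k) (b j) (b k)
  have diag_antisymm {i k} (hik : i ≠ k) : H (b i) (b i) = -H (b k) (b k) := by
    have := hH (b i) (b k) (b i) (b k)
    simp only [b.inner_eq_ite, hik, hik.symm, ↓reduceIte, mul_zero, mul_one, add_zero,
      zero_sub] at this
    linarith
  have diag (i) : H (b i) (b i) = 0 := by
    obtain ⟨j, hji, -⟩ := third i i
    obtain ⟨k, hki, hkj⟩ := third i j
    linarith [diag_antisymm hji.symm, diag_antisymm hki.symm, diag_antisymm hkj.symm]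
  have on_basis (i j) : H (b i) (b j) = 0 := by
    obtain rfl | hij := eq_or_ne i j
    exacts [diag i, off_diag hij]
  ext v w
  rw [← b.sum_repr v, ← b.sum_repr w]
  simp [on_basis]

end LinearAlgebra

section Calculus

variable {E F : Type*} [NormedAddCommGroup E] [NormedSpace ℝ E] [NormedAddCommGroup F]
  [NormedSpace ℝ F]

theorem fderiv_clm_apply_const_apply {G : Type*} [NormedAddCommGroup G] [NormedSpace ℝ G]
    {A : E → F →L[ℝ] G} {x : E} (hA : DifferentiableAt ℝ A x) (v : F) (t : E) :
    fderiv ℝ (fun y => A y v) x t = fderiv ℝ A x t v := by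
  simp [fderiv_clm_apply hA (differentiableAt_const v)]

variable {G : Type*} [NormedAddCommGroup G] [InnerProductSpace ℝ G]

theorem DifferentiableAt.inner_clm_apply_const {A : E → F →L[ℝ] G} {x : E}
    (hA : DifferentiableAt ℝ A x) (v : F) (w : G) :
    DifferentiableAt ℝ (fun y => ⟪A y v, w⟫) x :=
  (hA.clm_apply (differentiableAt_const v)).inner ℝ (differentiableAt_const w)

theorem fderiv_inner_clm_apply_const_apply {A : E → F →L[ℝ] G} {x : E}
    (hA : DifferentiableAt ℝ A x) (v : F) (w : G) (t : E) :
    fderiv ℝ (fun y => ⟪A y v, w⟫) x t = ⟪fderiv ℝ A x t v, w⟫ := by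
  rw [fderiv_inner_apply ℝ (hA.clm_apply (differentiableAt_const v)) (differentiableAt_const w),
    fderiv_clm_apply_const_apply hA]
  simp

end Calculus

theorem two_inner_eq_of_inner_add_inner_eq {E : Type*} [NormedAddCommGroup E]
    [InnerProductSpace ℝ E] {B : E → E → E} (hB : ∀ u v, B u v = B v u) (φ : E → ℝ)
    (h : ∀ u v w, ⟪B u v, w⟫ + ⟪B u w, v⟫ = φ u * ⟪v, w⟫) (u v w : E) :
    2 * ⟪B u v, w⟫ = φ u * ⟪v, w⟫ + φ v * ⟪u, w⟫ - φ w * ⟪u, v⟫ := by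
  have huvw := h u v w
  have hvuw := h v u w
  have hwuv := h w u v
  rw [hB v u] at hvuw
  rw [hB w u, hB w v] at hwuv
  linarith

section ConformalKilling

variable {E : Type*} [NormedAddCommGroup E] [InnerProductSpace ℝ E]
  {X : E → E} {f : E → ℝ} {c : ℝ}

theorem inner_fderiv_fderiv_add_inner_fderiv_fderiv (hX : ContDiff ℝ 2 X)
    (hf : Differentiable ℝ f)
    (hCK : ∀ x v w, ⟪fderiv ℝ X x v, w⟫ + ⟪fderiv ℝ X x w, v⟫ = c * f x * ⟪v, w⟫)
    (x u v w : E) :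
    ⟪fderiv ℝ (fderiv ℝ X) x u v, w⟫ + ⟪fderiv ℝ (fderiv ℝ X) x u w, v⟫ =
      c * fderiv ℝ f x u * ⟪v, w⟫ := by
  have hDX : Differentiable ℝ (fderiv ℝ X) := (hX.fderiv_right le_rfl).differentiable one_ne_zero
  have hDXvw (v w : E) : DifferentiableAt ℝ (fun y => ⟪fderiv ℝ X y v, w⟫) x :=
    (hDX x).inner_clm_apply_const v w
  have := congrArg (fun g => fderiv ℝ g x u) (funext fun y => hCK y v w)
  rw [fderiv_fun_add (hDXvw v w) (hDXvw w v)] at this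
  simp only [add_apply, fderiv_inner_clm_apply_const_apply (hDX x),
    fderiv_mul_const ((hf x).const_mul c), fderiv_const_mul (hf x), smul_apply, smul_eq_mul] at this
  linarith

theorem two_inner_fderiv_fderiv (hX : ContDiff ℝ 2 X) (hf : Differentiable ℝ f)
    (hCK : ∀ x v w, ⟪fderiv ℝ X x v, w⟫ + ⟪fderiv ℝ X x w, v⟫ = c * f x * ⟪v, w⟫)
    (x u v w : E) :
    2 * ⟪fderiv ℝ (fderiv ℝ X) x u v, w⟫ = c * (fderiv ℝ f x u * ⟪v, w⟫
      + fderiv ℝ f x v * ⟪u, w⟫ - fderiv ℝ f x w * ⟪u, v⟫) := by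
  have := two_inner_eq_of_inner_add_inner_eq (B := fun u v => fderiv ℝ (fderiv ℝ X) x u v)
    (fun u v => (hX.contDiffAt.isSymmSndFDerivAt (by simp)).eq u v) (fun u => c * fderiv ℝ f x u)
    (inner_fderiv_fderiv_add_inner_fderiv_fderiv hX hf hCK x) u v w
  linarith

theorem two_inner_fderiv_fderiv_fderiv (hX : ContDiff ℝ 3 X) (hf : ContDiff ℝ 2 f)
    (hCK : ∀ x v w, ⟪fderiv ℝ X x v, w⟫ + ⟪fderiv ℝ X x w, v⟫ = c * f x * ⟪v, w⟫)
    (x t u v w : E) :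
    2 * ⟪fderiv ℝ (fderiv ℝ (fderiv ℝ X)) x t u v, w⟫ = c * (fderiv ℝ (fderiv ℝ f) x t u * ⟪v, w⟫
      + fderiv ℝ (fderiv ℝ f) x t v * ⟪u, w⟫ - fderiv ℝ (fderiv ℝ f) x t w * ⟪u, v⟫) := by
  have hD2X : Differentiable ℝ (fderiv ℝ (fderiv ℝ X)) :=
    ((hX.fderiv_right (m := 2) (by norm_num)).fderiv_right (m := 1) (by norm_num)).differentiable
      one_ne_zero
  have hDf : Differentiable ℝ (fderiv ℝ f) :=
    (hf.fderiv_right (m := 1) (by norm_num)).differentiable one_ne_zero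
  have hD2Xu : DifferentiableAt ℝ (fun y => fderiv ℝ (fderiv ℝ X) y u) x :=
    (hD2X x).clm_apply (differentiableAt_const u)
  have := congrArg (fun g => fderiv ℝ g x t) (funext fun y =>
    two_inner_fderiv_fderiv (hX.of_le (by norm_num)) (hf.differentiable (by norm_num)) hCK y u v w)
  rw [fderiv_const_mul (hD2Xu.inner_clm_apply_const v w)] at this
  simp (disch := fun_prop) only [fderiv_const_mul, fderiv_fun_sub, fderiv_fun_add,
    fderiv_mul_const, smul_apply, add_apply, sub_apply, smul_eq_mul,
    fderiv_clm_apply_const_apply (hDf x), fderiv_inner_clm_apply_const_apply hD2Xu,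
    fderiv_clm_apply_const_apply (hD2X x)] at this
  linarith

theorem fderiv_fderiv_eq_zero_of_conformalKilling [FiniteDimensional ℝ E]
    (hE : 3 ≤ finrank ℝ E) (hX : ContDiff ℝ 3 X) (hf : ContDiff ℝ 2 f) (hc : c ≠ 0)
    (hCK : ∀ x v w, ⟪fderiv ℝ X x v, w⟫ + ⟪fderiv ℝ X x w, v⟫ = c * f x * ⟪v, w⟫) (x : E) :
    fderiv ℝ (fderiv ℝ f) x = 0 := by
  refine eq_zero_of_kulkarniNomizu_inner_eq_zero hE _ fun t u v w => ?_
  have htu := two_inner_fderiv_fderiv_fderiv hX hf hCK x t u v w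
  have hut := two_inner_fderiv_fderiv_fderiv hX hf hCK x u t v w
  rw [((hX.fderiv_right (m := 2) (by norm_num)).contDiffAt.isSymmSndFDerivAt (by simp)).eq u t,
    (hf.contDiffAt.isSymmSndFDerivAt (by simp)).eq u t] at hut
  apply mul_left_cancel₀ hc
  linear_combination htu - hut

end ConformalKilling

theorem contDiff_divE {n : ℕ} {X : EuclideanSpace ℝ (Fin n) → EuclideanSpace ℝ (Fin n)}
    {k m : WithTop ℕ∞} (hX : ContDiff ℝ k X) (hmk : m + 1 ≤ k) : ContDiff ℝ m (divE n X) :=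
  ContDiff.sum fun _ _ => ((hX.fderiv_right hmk).clm_apply contDiff_const).inner ℝ contDiff_const

/-- **Euclidean case of Lemma 2.2 (λ = 0).** If `n ≥ 3` and `X` is a `C³` conformal Killing
field of the Euclidean metric, then the Hessian of `div X` vanishes identically, i.e.
`div X` is an affine function. -/
theorem hessian_div_conformal_killing_eq_zero
    (n : ℕ) (hn : 3 ≤ n)
    (X : EuclideanSpace ℝ (Fin n) → EuclideanSpace ℝ (Fin n))
    (hX : ContDiff ℝ 3 X)
    (hCK : ∀ (x v w : EuclideanSpace ℝ (Fin n)),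
      ⟪fderiv ℝ X x v, w⟫ + ⟪fderiv ℝ X x w, v⟫ = (2 / (n : ℝ)) * divE n X x * ⟪v, w⟫) :
    ∀ (x v w : EuclideanSpace ℝ (Fin n)),
      fderiv ℝ (fderiv ℝ (divE n X)) x v w = 0 := by
  intro x v w
  have hc : 2 / (n : ℝ) ≠ 0 := div_ne_zero two_ne_zero (by positivity)
  rw [fderiv_fderiv_eq_zero_of_conformalKilling (by simpa using hn) hX
    (contDiff_divE hX (by norm_num)) hc hCK x]
  rfl
end

section
/- Let n ≥ 2 and let f : EuclideanSpace ℝ n → ℝ be of class C². Then f satisfies Hess f x (v, w) + (Δf x)·⟪v, w⟫ = 0 for every x, v, w (where Δf x = −(trace of Hess f x) is the geometer's Laplacian) if and only if f is affine, i.e. there exist c ∈ ℝ and a continuous linear map L : EuclideanSpace ℝ n → ℝ with f x = c + L x for all x. (This is the paper's assertion that the kernel of the adjoint (DScal)_e* V = Hess^e V + (Δ^e V)·e of the linearized scalar curvature operator at the Euclidean metric consists exactly of the affine functions.) -/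
/-! Taking the trace of `Hess f + (Δf)·⟪·,·⟫ = 0` gives `(n - 1)·Δf = 0`, so for `n ≥ 2` the
Laplacian and then the Hessian vanish, and a function with vanishing second derivative is affine
by the mean value theorem applied twice. An affine function has zero Hessian. -/

open scoped RealInnerProductSpace

/-- The Euclidean Hessian of a function, `Hess f x (v, w) = fderiv (fderiv f) x v w`. -/
noncomputable def hessE (n : ℕ) (f : EuclideanSpace ℝ (Fin n) → ℝ)
    (x v w : EuclideanSpace ℝ (Fin n)) : ℝ :=
  fderiv ℝ (fderiv ℝ f) x v w

/-- The geometer's Laplacian, `Δf = −(trace of Hess f)`. -/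
noncomputable def laplE (n : ℕ) (f : EuclideanSpace ℝ (Fin n) → ℝ)
    (x : EuclideanSpace ℝ (Fin n)) : ℝ :=
  -∑ i : Fin n, hessE n f x (stdBasis n i) (stdBasis n i)

theorem eq_add_fderiv_zero_of_fderiv_fderiv_eq_zero {𝕜 E F : Type*} [RCLike 𝕜]
    [NormedAddCommGroup E] [NormedSpace 𝕜 E] [NormedAddCommGroup F] [NormedSpace 𝕜 F]
    {f : E → F} (hf : Differentiable 𝕜 f) (hf' : Differentiable 𝕜 (fderiv 𝕜 f))
    (h : ∀ x, fderiv 𝕜 (fderiv 𝕜 f) x = 0) (x : E) :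
    f x = f 0 + fderiv 𝕜 f 0 x := by
  set L := fderiv 𝕜 f 0
  have hfderiv_const : ∀ y, fderiv 𝕜 f y = L := fun y => is_const_of_fderiv_eq_zero hf' h y 0
  have hsub : f x - L x = f 0 - L 0 :=
    is_const_of_fderiv_eq_zero (hf.sub L.differentiable)
      (fun y => by rw [fderiv_sub (hf y) L.differentiableAt, hfderiv_const, L.fderiv, sub_self])
      x 0
  rw [map_zero, sub_zero] at hsub
  rw [← hsub, sub_add_cancel]

theorem fderiv_fderiv_const_add_clm {𝕜 E F : Type*} [NontriviallyNormedField 𝕜]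
    [NormedAddCommGroup E] [NormedSpace 𝕜 E] [NormedAddCommGroup F] [NormedSpace 𝕜 F]
    (c : F) (L : E →L[𝕜] F) : fderiv 𝕜 (fderiv 𝕜 fun x => c + L x) = 0 := by
  have hfderiv : fderiv 𝕜 (fun x => c + L x) = fun _ => L :=
    funext fun x => by rw [fderiv_const_add, L.fderiv]
  rw [hfderiv, fderiv_fun_const]

theorem eq_zero_of_forall_add_neg_trace_mul_inner_eq_zero {ι E : Type*} [Fintype ι]
    [NormedAddCommGroup E] [InnerProductSpace ℝ E] {e : ι → E} (he : ∀ i, ⟪e i, e i⟫ = 1)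
    (hι : 2 ≤ Fintype.card ι) {B : E → E → ℝ}
    (h : ∀ v w, B v w + (-∑ i, B (e i) (e i)) * ⟪v, w⟫ = 0) : B = 0 := by
  set t := ∑ i, B (e i) (e i)
  have htrace : ((Fintype.card ι : ℝ) - 1) * t = 0 := by
    have := Finset.sum_eq_zero fun i (_ : i ∈ Finset.univ) => h (e i) (e i)
    simp only [he, mul_one, Finset.sum_add_distrib, Finset.sum_const, Finset.card_univ,
      nsmul_eq_mul] at this
    linarith
  have hcard : (Fintype.card ι : ℝ) - 1 ≠ 0 := by
    have : (2 : ℝ) ≤ Fintype.card ι := by exact_mod_cast hι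
    linarith
  have ht : t = 0 := (mul_eq_zero.1 htrace).resolve_left hcard
  funext v w
  simpa [ht] using h v w

theorem inner_stdBasis_self (n : ℕ) (i : Fin n) : ⟪stdBasis n i, stdBasis n i⟫ = 1 := by
  simp [stdBasis]

/-- **The kernel of `(DScal)_e*` consists of the affine functions.** For `n ≥ 2` and `f`
of class `C²` on Euclidean space, `Hess f + (Δf)·e = 0` holds identically if and only if
`f` is affine. -/
theorem kernel_adjoint_linearized_scalar_curvature_eq_affine
    (n : ℕ) (hn : 2 ≤ n)
    (f : EuclideanSpace ℝ (Fin n) → ℝ)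
    (hf : ContDiff ℝ 2 f) :
    (∀ (x v w : EuclideanSpace ℝ (Fin n)),
        hessE n f x v w + laplE n f x * ⟪v, w⟫ = 0) ↔
      ∃ (c : ℝ) (L : EuclideanSpace ℝ (Fin n) →L[ℝ] ℝ),
        ∀ x : EuclideanSpace ℝ (Fin n), f x = c + L x := by
  constructor
  · intro h
    have hhess : ∀ x, fderiv ℝ (fderiv ℝ f) x = 0 := fun x => by
      ext v w
      exact congrFun₂ (eq_zero_of_forall_add_neg_trace_mul_inner_eq_zero (inner_stdBasis_self n)
        (by simpa using hn) (h x)) v w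
    exact ⟨f 0, fderiv ℝ f 0, eq_add_fderiv_zero_of_fderiv_fderiv_eq_zero
      (hf.differentiable two_ne_zero) ((hf.fderiv_right le_rfl).differentiable one_ne_zero)
      hhess⟩
  · rintro ⟨c, L, hfe⟩
    obtain rfl : f = fun x => c + L x := funext hfe
    intro x v w
    simp [hessE, laplE, fderiv_fderiv_const_add_clm]
end

section
/- Let n ≥ 1, fix an index α, and let e_α be the α-th standard basis vector of EuclideanSpace ℝ n. Define the vector field X (the essential conformal Killing field of ℝⁿ obtained by conjugating a translation by the inversion map) by X x = ‖x‖²·e_α − 2·⟪x, e_α⟫·x. Then for every x, v, w one has ⟪fderiv X x v, w⟫ + ⟪fderiv X x w, v⟫ = −4·⟪x, e_α⟫·⟪v, w⟫, and div X x = −2n·⟪x, e_α⟫. In particular X is a conformal Killing field and the negative divergence satisfies δ^e X = 2n·x^α, as used in the definition of the Ricci version of the center of mass. -/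
/-!
The derivative of `X` at `x` is `v ↦ 2⟪x, v⟫ e_α − 2⟪v, e_α⟫ x − 2⟪x, e_α⟫ v`. Its first two
terms are adjoint to each other, so they cancel in the symmetrization and contribute
`⟪x, e_α⟫ − ⟪x, e_α⟫ = 0` to the trace; what remains is the multiple `−2⟪x, e_α⟫` of the
identity, which gives both identities and hence the conformal Killing equation.
-/

open scoped RealInnerProductSpace

/-- The essential conformal Killing field `X⁽ᵅ⁾ x = ‖x‖²·e_α − 2⟪x, e_α⟫·x` of `ℝⁿ`,
obtained by conjugating a translation by the inversion map. -/
noncomputable def invTranslation (n : ℕ) (α : Fin n)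
    (x : EuclideanSpace ℝ (Fin n)) : EuclideanSpace ℝ (Fin n) :=
  ‖x‖ ^ 2 • stdBasis n α - (2 * ⟪x, stdBasis n α⟫) • x

section InnerProductSpace

variable {E : Type*} [NormedAddCommGroup E] [InnerProductSpace ℝ E]

noncomputable def invTranslationField (a : E) (x : E) : E :=
  ‖x‖ ^ 2 • a - (2 * ⟪x, a⟫) • x

theorem fderiv_invTranslationField_apply (a x v : E) :
    fderiv ℝ (invTranslationField a) x v =
      (2 * ⟪x, v⟫) • a - (2 * ⟪v, a⟫) • x - (2 * ⟪x, a⟫) • v := by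
  have hnorm := (hasStrictFDerivAt_norm_sq x).hasFDerivAt.smul_const a
  have hinner := ((hasFDerivAt_id x).inner ℝ (hasFDerivAt_const a x)).const_mul 2
  have h : HasFDerivAt (invTranslationField a) _ x := hnorm.sub (hinner.smul (hasFDerivAt_id x))
  rw [h.fderiv]
  simp only [sub_apply, ContinuousLinearMap.smulRight_apply, smul_apply, coe_innerSL_apply,
    add_apply, ContinuousLinearMap.comp_apply, ContinuousLinearMap.prod_apply, zero_apply,
    fderivInnerCLM_apply, inner_zero_right, ContinuousLinearMap.id_apply, id_eq, zero_add,
    nsmul_eq_mul, smul_eq_mul]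
  module

theorem inner_fderiv_invTranslationField_add_inner_fderiv (a x v w : E) :
    ⟪fderiv ℝ (invTranslationField a) x v, w⟫ + ⟪fderiv ℝ (invTranslationField a) x w, v⟫ =
      -4 * ⟪x, a⟫ * ⟪v, w⟫ := by
  simp only [fderiv_invTranslationField_apply, inner_sub_left, real_inner_smul_left]
  rw [real_inner_comm a w, real_inner_comm a v, real_inner_comm w v]
  ring

theorem Orthonormal.sum_inner_fderiv_invTranslationField {ι : Type*} [Fintype ι] {b : ι → E}
    (hb : Orthonormal ℝ b) (a x : E) :
    ∑ i, ⟪fderiv ℝ (invTranslationField a) x (b i), b i⟫ = -(2 * Fintype.card ι) * ⟪x, a⟫ := by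
  have hterm (i : ι) : ⟪fderiv ℝ (invTranslationField a) x (b i), b i⟫ = -2 * ⟪x, a⟫ := by
    rw [fderiv_invTranslationField_apply]
    simp only [inner_sub_left, real_inner_smul_left, real_inner_self_eq_norm_sq, hb.1 i,
      real_inner_comm a (b i)]
    ring
  simp only [hterm, Finset.sum_const, Finset.card_univ, nsmul_eq_mul]
  ring

end InnerProductSpace

theorem orthonormal_stdBasis (n : ℕ) : Orthonormal ℝ (stdBasis n) := by
  have h : stdBasis n = EuclideanSpace.basisFun (Fin n) ℝ :=
    funext fun i => (EuclideanSpace.basisFun_apply (Fin n) ℝ i).symm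
  exact h ▸ (EuclideanSpace.basisFun (Fin n) ℝ).orthonormal

theorem invTranslation_eq_invTranslationField (n : ℕ) (α : Fin n) :
    invTranslation n α = invTranslationField (stdBasis n α) :=
  rfl

theorem divE_invTranslation (n : ℕ) (α : Fin n) (x : EuclideanSpace ℝ (Fin n)) :
    divE n (invTranslation n α) x = -(2 * (n : ℝ)) * ⟪x, stdBasis n α⟫ := by
  simpa [divE, invTranslation_eq_invTranslationField] using
    (orthonormal_stdBasis n).sum_inner_fderiv_invTranslationField (stdBasis n α) x

theorem invTranslation_conformal_killing_general (n : ℕ) (α : Fin n) :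
    (∀ (x v w : EuclideanSpace ℝ (Fin n)),
        ⟪fderiv ℝ (invTranslation n α) x v, w⟫ + ⟪fderiv ℝ (invTranslation n α) x w, v⟫ =
          -4 * ⟪x, stdBasis n α⟫ * ⟪v, w⟫) ∧
    (∀ x : EuclideanSpace ℝ (Fin n),
        divE n (invTranslation n α) x = -(2 * (n : ℝ)) * ⟪x, stdBasis n α⟫) ∧
    (∀ (x v w : EuclideanSpace ℝ (Fin n)),
        ⟪fderiv ℝ (invTranslation n α) x v, w⟫ + ⟪fderiv ℝ (invTranslation n α) x w, v⟫ =
          (2 / (n : ℝ)) * divE n (invTranslation n α) x * ⟪v, w⟫) ∧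
    (∀ x : EuclideanSpace ℝ (Fin n),
        -divE n (invTranslation n α) x = 2 * (n : ℝ) * ⟪x, stdBasis n α⟫) := by
  have hsymm := invTranslation_eq_invTranslationField n α ▸
    inner_fderiv_invTranslationField_add_inner_fderiv (stdBasis n α)
  have hn : (n : ℝ) ≠ 0 := Nat.cast_ne_zero.mpr α.pos.ne'
  refine ⟨hsymm, divE_invTranslation n α, fun x v w => ?_, fun x => ?_⟩
  · rw [hsymm, divE_invTranslation]
    field_simp
    ring
  · rw [divE_invTranslation]
    ring

/-- **The essential conformal Killing field and its divergence.** For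
`X x = ‖x‖²·e_α − 2⟪x, e_α⟫·x` one has the symmetrized-derivative identity
`⟪fderiv X x v, w⟫ + ⟪fderiv X x w, v⟫ = −4⟪x, e_α⟫⟪v, w⟫` and `div X x = −2n⟪x, e_α⟫`;
in particular `X` is a conformal Killing field and `δ^e X = −div X = 2n·x^α`. -/
theorem invTranslation_conformal_killing (n : ℕ) (hn : 1 ≤ n) (α : Fin n) :
    (∀ (x v w : EuclideanSpace ℝ (Fin n)),
        ⟪fderiv ℝ (invTranslation n α) x v, w⟫ + ⟪fderiv ℝ (invTranslation n α) x w, v⟫ =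
          -4 * ⟪x, stdBasis n α⟫ * ⟪v, w⟫) ∧
    (∀ x : EuclideanSpace ℝ (Fin n),
        divE n (invTranslation n α) x = -(2 * (n : ℝ)) * ⟪x, stdBasis n α⟫) ∧
    (∀ (x v w : EuclideanSpace ℝ (Fin n)),
        ⟪fderiv ℝ (invTranslation n α) x v, w⟫ + ⟪fderiv ℝ (invTranslation n α) x w, v⟫ =
          (2 / (n : ℝ)) * divE n (invTranslation n α) x * ⟪v, w⟫) ∧
    (∀ x : EuclideanSpace ℝ (Fin n),
        -divE n (invTranslation n α) x = 2 * (n : ℝ) * ⟪x, stdBasis n α⟫) :=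
  invTranslation_conformal_killing_general n α
end
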